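/- Let S, B_i, B_j be subspaces of ℝ^N each spanned by a subset of the standard orthonormal basis (e_1,…,e_N), and set A'_ij = B_i ⊓ (B_i ⊓ B_j)ᗮ, A'_ji = B_j ⊓ (B_i ⊓ B_j)ᗮ, W = S ⊓ (A'_ij)ᗮ and V = S ⊓ Wᗮ. Then V = S ⊓ A'_ij (so in particular V ≤ A'_ij), and A'_ij ≤ (A'_ji)ᗮ; consequently ⟨x, (P_{A'_ij} − P_{A'_ji})x⟩ = ‖x‖² for every x ∈ V. -/

import Mathlib

/-!
Coordinate subspaces correspond to sets of indices, with `⊓` becoming `∩` and `ᗮ` becoming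
complement. Both subspace relations therefore reduce to identities of set algebra, and on
`A'_ij ⊥ A'_ji` the projection `P_{A'_ij}` fixes `x` while `P_{A'_ji}` kills it.
-/

/-- The orthogonal projection onto a subspace `S`, viewed as an endomorphism. -/
noncomputable def projCLM {E : Type*} [NormedAddCommGroup E] [InnerProductSpace ℝ E]
    [FiniteDimensional ℝ E] (S : Submodule ℝ E) : E →L[ℝ] E :=
  S.subtypeL.comp (S.orthogonalProjection)

/-- A coordinate subspace of `ℝ^N`: one spanned by a subset of the standard orthonormal
basis vectors. -/
def IsCoordSubspace {N : ℕ} (S : Submodule ℝ (EuclideanSpace ℝ (Fin N))) : Prop :=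
  ∃ I : Set (Fin N),
    S = Submodule.span ℝ ((fun k => EuclideanSpace.single k (1 : ℝ)) '' I)

section Projection

variable {E : Type*} [NormedAddCommGroup E] [InnerProductSpace ℝ E] [FiniteDimensional ℝ E]

theorem projCLM_apply (S : Submodule ℝ E) (x : E) : projCLM S x = S.starProjection x := rfl

theorem inner_projCLM_sub_projCLM_self_of_mem {A B : Submodule ℝ E} (hAB : A ≤ Bᗮ) {x : E}
    (hx : x ∈ A) : inner ℝ x ((projCLM A - projCLM B) x) = ‖x‖ ^ 2 := by
  rw [sub_apply, projCLM_apply, projCLM_apply,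
    Submodule.starProjection_eq_self_iff.mpr hx,
    B.starProjection_apply_eq_zero_iff.mpr (hAB hx), sub_zero,
    real_inner_self_eq_norm_sq]

end Projection

namespace EuclideanSpace

variable {ι : Type*}

def coordSubspace (I : Set ι) : Submodule ℝ (EuclideanSpace ℝ ι) where
  carrier := {x | ∀ k ∉ I, x k = 0}
  add_mem' hx hy k hk := by simp [hx k hk, hy k hk]
  zero_mem' _ _ := rfl
  smul_mem' c x hx k hk := by simp [hx k hk]

@[simp]
theorem mem_coordSubspace {I : Set ι} {x : EuclideanSpace ℝ ι} :
    x ∈ coordSubspace I ↔ ∀ k ∉ I, x k = 0 := Iff.rfl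

theorem coordSubspace_mono {I J : Set ι} (h : I ⊆ J) : coordSubspace I ≤ coordSubspace J :=
  fun _ hx k hk => hx k fun hI => hk (h hI)

@[simp]
theorem coordSubspace_inf (I J : Set ι) :
    coordSubspace I ⊓ coordSubspace J = coordSubspace (I ∩ J) := by
  ext x
  simp only [Submodule.mem_inf, mem_coordSubspace, Set.mem_inter_iff, not_and_or]
  exact ⟨fun h k hk => hk.elim (h.1 k) (h.2 k), fun h => ⟨fun k hk => h k (.inl hk),
    fun k hk => h k (.inr hk)⟩⟩

variable [DecidableEq ι]

theorem single_one_mem_coordSubspace {I : Set ι} {k : ι} :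
    single k (1 : ℝ) ∈ coordSubspace I ↔ k ∈ I := by
  refine ⟨fun h => by_contra fun hk => by simpa using h k hk, fun hk j hj => ?_⟩
  simp [show j ≠ k from fun h => hj (h ▸ hk)]

theorem span_single_one_image [Fintype ι] (I : Set ι) :
    Submodule.span ℝ ((fun k => single k (1 : ℝ)) '' I) = coordSubspace I := by
  refine le_antisymm (Submodule.span_le.mpr ?_) fun x hx => ?_
  · rintro _ ⟨k, hk, rfl⟩
    exact single_one_mem_coordSubspace.mpr hk
  · rw [← (basisFun ι ℝ).sum_repr x]
    refine Submodule.sum_mem _ fun k _ => ?_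
    by_cases hk : k ∈ I
    · simpa using
        Submodule.smul_mem _ (x k) (Submodule.subset_span (Set.mem_image_of_mem _ hk))
    · simp [hx k hk]

@[simp]
theorem orthogonal_coordSubspace [Fintype ι] (I : Set ι) :
    (coordSubspace I)ᗮ = coordSubspace Iᶜ := by
  ext x
  refine ⟨fun hx k hk => ?_, fun hx y hy => ?_⟩
  · simpa [inner_single_left] using hx _ (single_one_mem_coordSubspace.mpr (not_not.mp hk))
  · refine Finset.sum_eq_zero fun k _ => ?_
    by_cases hk : k ∈ I
    · simp [hx k (not_not.mpr hk)]
    · simp [hy k hk]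

end EuclideanSpace

open EuclideanSpace

theorem IsCoordSubspace.exists_eq_coordSubspace {N : ℕ}
    {S : Submodule ℝ (EuclideanSpace ℝ (Fin N))} (hS : IsCoordSubspace S) :
    ∃ I, S = coordSubspace I := by
  obtain ⟨I, rfl⟩ := hS
  exact ⟨I, span_single_one_image I⟩

/-- The content of the proof of Corollary 3 of the paper: for coordinate subspaces
(arising from diagonal covariance matrices), `V = S ⊓ A'_ij ≤ A'_ij`,
`A'_ij ≤ (A'_ji)ᗮ`, hence `⟨x, (P_{A'_ij} − P_{A'_ji})x⟩ = ‖x‖²` on `V`. -/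
theorem coord_subspace_suff_condition
    (N : ℕ) (S Bi Bj : Submodule ℝ (EuclideanSpace ℝ (Fin N)))
    (hScoord : IsCoordSubspace S) (hBicoord : IsCoordSubspace Bi)
    (hBjcoord : IsCoordSubspace Bj)
    (Aij Aji W V : Submodule ℝ (EuclideanSpace ℝ (Fin N)))
    (hAij : Aij = Bi ⊓ (Bi ⊓ Bj)ᗮ) (hAji : Aji = Bj ⊓ (Bi ⊓ Bj)ᗮ)
    (hW : W = S ⊓ Aijᗮ) (hV : V = S ⊓ Wᗮ) :
    V = S ⊓ Aij ∧ Aij ≤ Ajiᗮ ∧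
      ∀ x ∈ V, (inner ℝ x ((projCLM Aij - projCLM Aji) x) : ℝ) = ‖x‖ ^ 2 := by
  obtain ⟨s, rfl⟩ := hScoord.exists_eq_coordSubspace
  obtain ⟨bi, rfl⟩ := hBicoord.exists_eq_coordSubspace
  obtain ⟨bj, rfl⟩ := hBjcoord.exists_eq_coordSubspace
  have hs : s ∩ (s ∩ (bi ∩ (bi ∩ bj)ᶜ)ᶜ)ᶜ = s ∩ (bi ∩ (bi ∩ bj)ᶜ) := by
    ext; simp only [Set.mem_inter_iff, Set.mem_compl_iff]; tauto
  have hb : bi ∩ (bi ∩ bj)ᶜ ⊆ (bj ∩ (bi ∩ bj)ᶜ)ᶜ := by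
    intro k; simp only [Set.mem_inter_iff, Set.mem_compl_iff]; tauto
  have hVeq : V = coordSubspace s ⊓ Aij := by simp [hV, hW, hAij, hs]
  have hle : Aij ≤ Ajiᗮ := by simpa [hAij, hAji] using coordSubspace_mono hb
  exact ⟨hVeq, hle, fun x hx => inner_projCLM_sub_projCLM_self_of_mem hle (hVeq ▸ hx).2⟩
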